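/- For any grid graph G = P_s □ P_t (s, t ≥ 2) and every integer k with 1 ≤ k ≤ s + t − 2, the k-metric dimension of G equals 2k. -/

import Mathlib

/-!
The distance in `P_s □ P_t` is the taxicab distance of the coordinates.

Lower bound: the pair `(1,0), (0,1)` is separated exactly by the vertices with exactly one zero
coordinate, and the pair `(0,0), (1,1)` only by the other vertices, so a `k`-resolving set meets
two disjoint sets in at least `k` vertices each.

Upper bound: take the two ends of each of `k` lines of the grid, chosen among the rows and the
columns other than the first and the last one (so that no corner is shared), with row `0` among
them. The distances from `u` to the two ends of row `b` determine `u.1` and `|u.2 - b|`. Hence,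
for `u ≠ w`, both ends of a line are equidistant from `u` and `w` only if that line is the
perpendicular bisector of `u` and `w`; it is then not a boundary line, and no other line has an
equidistant end. Either way at most `k` of the `2k` chosen vertices fail to separate `u` and `w`.
-/

/-- A finset `S` of vertices is a `k`-resolving set for `G`: any two distinct vertices `u, w`
have different distances to at least `k` vertices of `S`. -/
def IsKResolvingSet {V : Type*} [DecidableEq V] (G : SimpleGraph V) (k : ℕ) (S : Finset V) : Prop :=
  ∀ u w : V, u ≠ w → k ≤ (S.filter (fun v => G.dist u v ≠ G.dist w v)).card

open Finset

namespace SimpleGraph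

lemma natDist_le_length_of_walk_pathGraph {n : ℕ} {u v : Fin n} (p : (pathGraph n).Walk u v) :
    Nat.dist u v ≤ p.length := by
  induction p with
  | nil => simp
  | cons h _ ih =>
    rw [pathGraph_adj] at h
    rw [Walk.length_cons]
    unfold Nat.dist at *
    omega

lemma pathGraph_dist_le_natDist {n : ℕ} (u v : Fin n) :
    (pathGraph n).dist u v ≤ Nat.dist u v := by
  wlog huv : u ≤ v generalizing u v
  · rw [dist_comm, Nat.dist_comm]
    exact this v u (le_of_not_ge huv)
  obtain ⟨j, hj⟩ : ∃ j, v.val = u.val + j := ⟨v - u, by omega⟩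
  rw [show Nat.dist u v = j by unfold Nat.dist; omega]
  induction j generalizing v with
  | zero => simp [Fin.ext hj]
  | succ j ih =>
    let w : Fin n := ⟨u + j, by omega⟩
    calc (pathGraph n).dist u v ≤ (pathGraph n).dist u w + (pathGraph n).dist w v :=
          (pathGraph_preconnected n u w).dist_triangle_left v
      _ ≤ j + 1 := by
        refine add_le_add (ih w (Fin.le_def.2 (by simp [w])) rfl) (dist_eq_one_iff_adj.2 ?_).le
        exact pathGraph_adj.2 (Or.inl (by simp only [w]; omega))

lemma pathGraph_dist {n : ℕ} (u v : Fin n) : (pathGraph n).dist u v = Nat.dist u v := by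
  refine (pathGraph_dist_le_natDist u v).antisymm ?_
  obtain ⟨p, hp⟩ := (pathGraph_preconnected n u v).exists_walk_length_eq_dist
  exact hp ▸ natDist_le_length_of_walk_pathGraph p

lemma dist_boxProd {α β : Type*} {G : SimpleGraph α} {H : SimpleGraph β}
    (hG : G.Preconnected) (hH : H.Preconnected) (x y : α × β) :
    (G □ H).dist x y = G.dist x.1 y.1 + H.dist x.2 y.2 := by
  have hGH : (G □ H).Reachable x y := reachable_boxProd.2 ⟨hG _ _, hH _ _⟩
  have := edist_boxProd (G := G) (H := H) x y
  rw [← hGH.coe_dist_eq_edist, ← (hG x.1 y.1).coe_dist_eq_edist,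
    ← (hH x.2 y.2).coe_dist_eq_edist] at this
  exact_mod_cast this

end SimpleGraph

open SimpleGraph

lemma IsKResolvingSet.two_mul_le_card {V : Type*} [DecidableEq V] {G : SimpleGraph V} {k : ℕ}
    {S : Finset V} (hS : IsKResolvingSet G k S) {u₁ w₁ u₂ w₂ : V} (h₁ : u₁ ≠ w₁) (h₂ : u₂ ≠ w₂)
    (hdisj : ∀ v, G.dist u₁ v ≠ G.dist w₁ v → G.dist u₂ v = G.dist w₂ v) :
    2 * k ≤ S.card := by
  set S₁ := S.filter fun v => G.dist u₁ v ≠ G.dist w₁ v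
  set S₂ := S.filter fun v => G.dist u₂ v ≠ G.dist w₂ v
  have hS₁₂ : Disjoint S₁ S₂ := disjoint_filter.2 fun v _ hv => not_not.2 (hdisj v hv)
  have hk₁ : k ≤ S₁.card := hS u₁ w₁ h₁
  have hk₂ : k ≤ S₂.card := hS u₂ w₂ h₂
  calc 2 * k ≤ S₁.card + S₂.card := by omega
    _ = (S₁ ∪ S₂).card := (card_union_of_disjoint hS₁₂).symm
    _ ≤ S.card := card_le_card (union_subset (filter_subset _ _) (filter_subset _ _))

abbrev gridGraph (s t : ℕ) : SimpleGraph (Fin s × Fin t) := pathGraph s □ pathGraph t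

lemma gridGraph_dist {s t : ℕ} (x y : Fin s × Fin t) :
    (gridGraph s t).dist x y = Nat.dist x.1 y.1 + Nat.dist x.2 y.2 := by
  rw [dist_boxProd (pathGraph_preconnected s) (pathGraph_preconnected t), pathGraph_dist,
    pathGraph_dist]

lemma two_mul_le_card_of_isKResolvingSet_gridGraph {s t k : ℕ} (hs : 2 ≤ s) (ht : 2 ≤ t)
    {S : Finset (Fin s × Fin t)} (hS : IsKResolvingSet (gridGraph s t) k S) :
    2 * k ≤ S.card := by
  let x₀ : Fin s := ⟨0, by omega⟩
  let x₁ : Fin s := ⟨1, hs⟩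
  let y₀ : Fin t := ⟨0, by omega⟩
  let y₁ : Fin t := ⟨1, ht⟩
  refine hS.two_mul_le_card (u₁ := (x₁, y₀)) (w₁ := (x₀, y₁)) (u₂ := (x₀, y₀)) (w₂ := (x₁, y₁))
    (by simp [x₀, x₁, Fin.ext_iff]) (by simp [x₀, x₁, Fin.ext_iff]) fun v hv => ?_
  simp only [gridGraph_dist, Nat.dist, x₀, x₁, y₀, y₁] at hv ⊢
  omega

section Lines

variable {m n : ℕ}

local notation "𝔾" => gridGraph (m + 1) (n + 1)

/-- `inl b` is the row `{v | v.2 = b}` and `inr a` the column `{v | v.1 = a}`. -/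
def lineEnds : Fin (n + 1) ⊕ Fin (m + 1) → Finset (Fin (m + 1) × Fin (n + 1))
  | .inl b => {(0, b), (Fin.last m, b)}
  | .inr a => {(a, 0), (a, Fin.last n)}

lemma mem_lineEnds_inl {b : Fin (n + 1)} {v : Fin (m + 1) × Fin (n + 1)} :
    v ∈ lineEnds (.inl b) ↔ (v.1.val = 0 ∨ v.1.val = m) ∧ v.2 = b := by
  simp only [lineEnds, mem_insert, mem_singleton, Prod.ext_iff, Fin.ext_iff, Fin.val_zero,
    Fin.val_last]
  tauto

lemma mem_lineEnds_inr {a : Fin (m + 1)} {v : Fin (m + 1) × Fin (n + 1)} :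
    v ∈ lineEnds (.inr a) ↔ v.1 = a ∧ (v.2.val = 0 ∨ v.2.val = n) := by
  simp only [lineEnds, mem_insert, mem_singleton, Prod.ext_iff, Fin.ext_iff, Fin.val_zero,
    Fin.val_last]
  tauto

lemma card_lineEnds_le (ℓ : Fin (n + 1) ⊕ Fin (m + 1)) : (lineEnds ℓ).card ≤ 2 := by
  cases ℓ <;> exact card_le_two

lemma card_lineEnds (hm : 1 ≤ m) (hn : 1 ≤ n) (ℓ : Fin (n + 1) ⊕ Fin (m + 1)) :
    (lineEnds ℓ).card = 2 := by
  rcases ℓ with b | a <;> refine card_pair ?_ <;>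
    simp only [ne_eq, Prod.ext_iff, Fin.ext_iff, Fin.val_zero, Fin.val_last] <;> omega

def rowsAndInnerColumns (m n : ℕ) : Finset (Fin (n + 1) ⊕ Fin (m + 1)) :=
  univ.disjSum (Ioo 0 (Fin.last m))

lemma card_rowsAndInnerColumns (hm : 1 ≤ m) : (rowsAndInnerColumns m n).card = m + n := by
  rw [rowsAndInnerColumns, card_disjSum, card_univ, Fintype.card_fin, Fin.card_Ioo, Fin.val_last,
    Fin.val_zero]
  omega

lemma pairwiseDisjoint_lineEnds :
    (rowsAndInnerColumns m n : Set (Fin (n + 1) ⊕ Fin (m + 1))).PairwiseDisjoint lineEnds := by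
  rintro (b | a) hℓ (b' | a') hℓ' hne <;>
    simp only [rowsAndInnerColumns, mem_coe, inl_mem_disjSum, inr_mem_disjSum, mem_Ioo,
      Fin.lt_def] at hℓ hℓ' <;>
    simp only [Function.onFun, Finset.disjoint_left, mem_lineEnds_inl, mem_lineEnds_inr]
  all_goals
    rintro ⟨x, y⟩
    simp only [Fin.ext_iff, Fin.val_zero, Fin.val_last, ne_eq, Sum.inl.injEq, Sum.inr.injEq,
      reduceCtorEq, not_false_eq_true] at *
    omega

lemma card_biUnion_lineEnds (hm : 1 ≤ m) (hn : 1 ≤ n) {L : Finset (Fin (n + 1) ⊕ Fin (m + 1))}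
    (hL : L ⊆ rowsAndInnerColumns m n) : (L.biUnion lineEnds).card = 2 * L.card := by
  rw [card_biUnion (pairwiseDisjoint_lineEnds.subset hL),
    sum_const_nat fun ℓ _ => card_lineEnds hm hn ℓ, mul_comm]

lemma exists_subset_rowsAndInnerColumns_card_eq {k : ℕ} (hm : 1 ≤ m) (hk1 : 1 ≤ k)
    (hk2 : k ≤ m + n) : ∃ L ⊆ rowsAndInnerColumns m n, .inl 0 ∈ L ∧ L.card = k := by
  obtain ⟨L, h0, hL, hcard⟩ :=
    exists_subsuperset_card_eq (s := {.inl 0}) (t := rowsAndInnerColumns m n)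
      (singleton_subset_iff.2 (inl_mem_disjSum.2 (mem_univ _))) (by simpa using hk1)
      (by rwa [card_rowsAndInnerColumns hm])
  exact ⟨L, hL, singleton_subset_iff.1 h0, hcard⟩

variable {u w : Fin (m + 1) × Fin (n + 1)}

lemma forall_lineEnds_inl_equidistant_iff {b : Fin (n + 1)} :
    (∀ v ∈ lineEnds (.inl b), (𝔾).dist u v = (𝔾).dist w v) ↔
      u.1 = w.1 ∧ Nat.dist u.2 b = Nat.dist w.2 b := by
  simp only [lineEnds, mem_insert, mem_singleton, forall_eq_or_imp, forall_eq, gridGraph_dist,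
    Fin.ext_iff, Fin.val_zero, Fin.val_last, Nat.dist_zero_right,
    Nat.dist_eq_sub_of_le u.1.is_le, Nat.dist_eq_sub_of_le w.1.is_le]
  omega

lemma forall_lineEnds_inr_equidistant_iff {a : Fin (m + 1)} :
    (∀ v ∈ lineEnds (.inr a), (𝔾).dist u v = (𝔾).dist w v) ↔
      u.2 = w.2 ∧ Nat.dist u.1 a = Nat.dist w.1 a := by
  simp only [lineEnds, mem_insert, mem_singleton, forall_eq_or_imp, forall_eq, gridGraph_dist,
    Fin.ext_iff, Fin.val_zero, Fin.val_last, Nat.dist_zero_right,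
    Nat.dist_eq_sub_of_le u.2.is_le, Nat.dist_eq_sub_of_le w.2.is_le]
  omega

lemma ne_inl_zero_of_forall_lineEnds_equidistant (huw : u ≠ w) {ℓ : Fin (n + 1) ⊕ Fin (m + 1)}
    (hℓ : ∀ v ∈ lineEnds ℓ, (𝔾).dist u v = (𝔾).dist w v) : ℓ ≠ .inl 0 := by
  rintro rfl
  obtain ⟨h1, h2⟩ := forall_lineEnds_inl_equidistant_iff.1 hℓ
  refine huw (Prod.ext h1 (Fin.ext ?_))
  simpa only [Fin.val_zero, Nat.dist_zero_right] using h2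

lemma mem_lineEnds_of_forall_lineEnds_equidistant (huw : u ≠ w)
    {ℓ ℓ' : Fin (n + 1) ⊕ Fin (m + 1)} {v : Fin (m + 1) × Fin (n + 1)}
    (hℓ : ∀ x ∈ lineEnds ℓ, (𝔾).dist u x = (𝔾).dist w x) (hv : v ∈ lineEnds ℓ')
    (hvuw : (𝔾).dist u v = (𝔾).dist w v) : v ∈ lineEnds ℓ := by
  rcases ℓ with b | a
  · obtain ⟨h1, h2⟩ := forall_lineEnds_inl_equidistant_iff.1 hℓ
    have h3 : u.2.val ≠ w.2.val := fun h => huw (Prod.ext h1 (Fin.ext h))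
    rw [gridGraph_dist, gridGraph_dist, h1, Nat.add_left_cancel_iff] at hvuw
    have := u.2.isLt; have := w.2.isLt
    rw [mem_lineEnds_inl, Fin.ext_iff]
    rcases ℓ' with b' | a' <;>
      simp only [mem_lineEnds_inl, mem_lineEnds_inr, Fin.ext_iff] at hv <;>
      simp only [Nat.dist] at h2 hvuw <;>
      omega
  · obtain ⟨h1, h2⟩ := forall_lineEnds_inr_equidistant_iff.1 hℓ
    have h3 : u.1.val ≠ w.1.val := fun h => huw (Prod.ext (Fin.ext h) h1)
    rw [gridGraph_dist, gridGraph_dist, h1, Nat.add_right_cancel_iff] at hvuw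
    have := u.1.isLt; have := w.1.isLt
    rw [mem_lineEnds_inr, Fin.ext_iff]
    rcases ℓ' with b' | a' <;>
      simp only [mem_lineEnds_inl, mem_lineEnds_inr, Fin.ext_iff] at hv <;>
      simp only [Nat.dist] at h2 hvuw <;>
      omega

lemma card_filter_biUnion_lineEnds_equidistant_le {L : Finset (Fin (n + 1) ⊕ Fin (m + 1))}
    (h0 : .inl 0 ∈ L) (huw : u ≠ w) :
    ((L.biUnion lineEnds).filter fun v => (𝔾).dist u v = (𝔾).dist w v).card ≤ L.card := by
  by_cases hbisector : ∃ ℓ ∈ L, ∀ v ∈ lineEnds ℓ, (𝔾).dist u v = (𝔾).dist w v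
  · obtain ⟨ℓ, hℓL, hℓ⟩ := hbisector
    calc _ ≤ (lineEnds ℓ).card := card_le_card fun v hv => by
            obtain ⟨hv, hvuw⟩ := mem_filter.1 hv
            obtain ⟨ℓ', -, hv⟩ := mem_biUnion.1 hv
            exact mem_lineEnds_of_forall_lineEnds_equidistant huw hℓ hv hvuw
      _ ≤ ({.inl 0, ℓ} : Finset _).card := by
        rw [card_pair (ne_inl_zero_of_forall_lineEnds_equidistant huw hℓ).symm]
        exact card_lineEnds_le ℓ
      _ ≤ L.card := card_le_card (insert_subset h0 (singleton_subset_iff.2 hℓL))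
  · push Not at hbisector
    rw [filter_biUnion]
    refine (card_biUnion_le_card_mul _ _ 1 fun ℓ hℓ => ?_).trans_eq (mul_one _)
    obtain ⟨v, hv, hvuw⟩ := hbisector ℓ hℓ
    have := card_lt_card
      (filter_ssubset (p := fun v => (𝔾).dist u v = (𝔾).dist w v).2 ⟨v, hv, hvuw⟩)
    have := card_lineEnds_le ℓ
    omega

lemma isKResolvingSet_biUnion_lineEnds (hm : 1 ≤ m) (hn : 1 ≤ n)
    {L : Finset (Fin (n + 1) ⊕ Fin (m + 1))} (hL : L ⊆ rowsAndInnerColumns m n)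
    (h0 : .inl 0 ∈ L) : IsKResolvingSet 𝔾 L.card (L.biUnion lineEnds) := by
  intro u w huw
  have hsplit := card_filter_add_card_filter_not (s := L.biUnion lineEnds)
    fun v => (𝔾).dist u v ≠ (𝔾).dist w v
  simp only [ne_eq, not_not] at hsplit ⊢
  have := card_filter_biUnion_lineEnds_equidistant_le h0 huw
  have := card_biUnion_lineEnds hm hn hL
  omega

end Lines

/-- For the grid graph `G = P_s □ P_t` (`s, t ≥ 2`) and any `k` with `1 ≤ k ≤ s + t - 2`,
the `k`-metric dimension of `G` (the least size of a `k`-resolving set) equals `2k`. -/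
theorem grid_kMetricDimension (s t : ℕ) (hs : 2 ≤ s) (ht : 2 ≤ t)
    (k : ℕ) (hk1 : 1 ≤ k) (hk2 : k ≤ s + t - 2) :
    sInf {n : ℕ | ∃ S : Finset (Fin s × Fin t),
        IsKResolvingSet ((SimpleGraph.pathGraph s).boxProd (SimpleGraph.pathGraph t)) k S ∧
          S.card = n} = 2 * k := by
  obtain ⟨m, rfl⟩ : ∃ m, s = m + 1 := ⟨s - 1, by omega⟩
  obtain ⟨n, rfl⟩ : ∃ n, t = n + 1 := ⟨t - 1, by omega⟩
  obtain ⟨L, hL, h0, rfl⟩ :=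
    exists_subset_rowsAndInnerColumns_card_eq (by omega) hk1 (by omega : k ≤ m + n)
  refine IsLeast.csInf_eq ⟨⟨_, isKResolvingSet_biUnion_lineEnds (by omega) (by omega) hL h0,
    card_biUnion_lineEnds (by omega) (by omega) hL⟩, ?_⟩
  rintro _ ⟨S, hS, rfl⟩
  exact two_mul_le_card_of_isKResolvingSet_gridGraph hs ht hS
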